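/- Let P₁, …, P_n be sample polygons, where P_i has k_i ≥ 3 edges f^i_1, …, f^i_{k_i} with lengths ℓ_i(f^i_j) > 0 satisfying 2ℓ_i(f^i_j) < ℓ_i(f^i_1) + … + ℓ_i(f^i_{k_i}) for each j. Let p = (p₁, …, p_n) be a point of the scheme of polygons, i.e. each p_i : {f^i_1, …, f^i_{k_i}} → ℝ³ satisfies ‖p_i(f^i_j)‖ = ℓ_i(f^i_j) for all j and Σ_j p_i(f^i_j) = 0. Define the tangent space T_p as the real vector space of tuples t = (t₁, …, t_n), t_i : {f^i_1, …, f^i_{k_i}} → ℝ³, satisfying ⟨p_i(f^i_j), t_i(f^i_j)⟩ = 0 for all i, j and Σ_j t_i(f^i_j) = 0 for all i. Then dim T_p = m + Σ_{i=1}^n (2k_i − 3), where m is the number of indices i for which p_i is singular, i.e. all vectors p_i(f^i_1), …, p_i(f^i_{k_i}) are parallel. Equivalently, the contribution of each non-singular component is 2k_i − 3 and of each singular component is 2k_i − 2. -/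

import Mathlib

/-
Sample polygons and their scheme of realizations up to translation: a tuple of
sample polygons `P₁, …, P_n`, polygon `Pᵢ` having `k i` oriented edges with
positive lengths `ℓ i j` satisfying the nondegeneracy condition.  A point `p`
of the scheme assigns to each edge a vector in `ℝ³` of the prescribed length,
the edge vectors of each polygon summing to zero.  The tangent space at `p` is
the space of first-order deformations `t`.
-/

noncomputable section

/-- Euclidean 3-space. -/
abbrev E3 : Type := EuclideanSpace ℝ (Fin 3)

/-- The tangent space at a point `p` of the scheme of polygons: tuples `t`
with `⟪p i j, t i j⟫ = 0` for every edge and `∑ j, t i j = 0` for every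
polygon. -/
def polygonTangentSpace (n : ℕ) (k : Fin n → ℕ)
    (p : (i : Fin n) → Fin (k i) → E3) :
    Submodule ℝ ((i : Fin n) → Fin (k i) → E3) where
  carrier := {t | (∀ i j, (inner ℝ (p i j) (t i j) : ℝ) = 0) ∧ ∀ i, ∑ j, t i j = 0}
  add_mem' := by
    rintro a b ⟨ha1, ha2⟩ ⟨hb1, hb2⟩
    refine ⟨fun i j => ?_, fun i => ?_⟩
    · simp [inner_add_right, ha1 i j, hb1 i j]
    · simp [Finset.sum_add_distrib, ha2 i, hb2 i]
  zero_mem' := by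
    exact ⟨fun i j => by simp, fun i => by simp⟩
  smul_mem' := by
    rintro c a ⟨ha1, ha2⟩
    refine ⟨fun i j => ?_, fun i => ?_⟩
    · simp [inner_smul_right, ha1 i j]
    · simp [← Finset.smul_sum, ha2 i]

/-- A realization of a single polygon is singular iff all its edge vectors are
parallel. -/
def IsSingularPolygon {m : ℕ} (q : Fin m → E3) : Prop :=
  ∃ d : E3, ∀ j, ∃ c : ℝ, q j = c • d

open Module Submodule Finset

/-- Tangent space of a single polygon. -/
def sT {m : ℕ} (q : Fin m → E3) : Submodule ℝ (Fin m → E3) where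
  carrier := {t | (∀ j, (inner ℝ (q j) (t j) : ℝ) = 0) ∧ ∑ j, t j = 0}
  add_mem' := by
    rintro a b ⟨ha1, ha2⟩ ⟨hb1, hb2⟩
    exact ⟨fun j => by simp [inner_add_right, ha1 j, hb1 j],
      by simp [Finset.sum_add_distrib, ha2, hb2]⟩
  zero_mem' := ⟨fun j => by simp, by simp⟩
  smul_mem' := by
    rintro c a ⟨ha1, ha2⟩
    exact ⟨fun j => by simp [inner_smul_right, ha1 j],
      by simp [← Finset.smul_sum, ha2]⟩

/-- The summation map on the product of orthogonal complements. -/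
def sMap {m : ℕ} (q : Fin m → E3) :
    ((j : Fin m) → ↥((ℝ ∙ q j)ᗮ)) →ₗ[ℝ] E3 where
  toFun t := ∑ j, (t j : E3)
  map_add' a b := by simp [Finset.sum_add_distrib]
  map_smul' c a := by simp [Finset.smul_sum]

/-- `sT q` is isomorphic to the kernel of the summation map. -/
def sTEquiv {m : ℕ} (q : Fin m → E3) :
    ↥(sT q) ≃ₗ[ℝ] ↥(LinearMap.ker (sMap q)) where
  toFun t := ⟨fun j => ⟨t.1 j, by
      rw [Submodule.mem_orthogonal_singleton_iff_inner_right]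
      exact t.2.1 j⟩, by
    have := t.2.2
    simpa [sMap, LinearMap.mem_ker] using this⟩
  invFun t := ⟨fun j => (t.1 j : E3), fun j => by
      have := (t.1 j).2
      rw [Submodule.mem_orthogonal_singleton_iff_inner_right] at this
      exact this,
    t.2⟩
  left_inv t := rfl
  right_inv t := rfl
  map_add' a b := rfl
  map_smul' c a := rfl

lemma range_sMap {m : ℕ} (q : Fin m → E3) :
    LinearMap.range (sMap q) = ⨆ j, (ℝ ∙ q j)ᗮ := by
  apply le_antisymm
  · rintro v ⟨t, rfl⟩
    show ∑ j, (t j : E3) ∈ _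
    exact Submodule.sum_mem _ fun j _ => Submodule.mem_iSup_of_mem j (t j).2
  · rw [iSup_le_iff]
    intro j v hv
    refine ⟨Pi.single j ⟨v, hv⟩, ?_⟩
    simp only [sMap, LinearMap.coe_mk, AddHom.coe_mk]
    rw [Finset.sum_eq_single j]
    · simp
    · intro b _ hb; simp [Pi.single_eq_of_ne hb]
    · simp

lemma finrank_dom {m : ℕ} (q : Fin m → E3) (hq : ∀ j, q j ≠ 0) :
    finrank ℝ ((j : Fin m) → ↥((ℝ ∙ q j)ᗮ)) = 2 * m := by
  rw [finrank_pi_fintype]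
  have h : ∀ j, finrank ℝ ↥((ℝ ∙ q j)ᗮ) = 2 := by
    intro j
    have h1 := Submodule.finrank_add_finrank_orthogonal (K := (ℝ ∙ q j))
    rw [finrank_span_singleton (hq j), finrank_euclideanSpace_fin] at h1
    omega
  simp [h]
  ring

open scoped Classical in
lemma singleTangent_finrank {m : ℕ} (hm : 3 ≤ m) (q : Fin m → E3)
    (hq : ∀ j, q j ≠ 0) :
    finrank ℝ (sT q) =
      if IsSingularPolygon q then 2 * m - 2 else 2 * m - 3 := by
  have hker := LinearMap.finrank_range_add_finrank_ker (sMap q)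
  rw [finrank_dom q hq, range_sMap] at hker
  rw [(sTEquiv q).finrank_eq]
  by_cases hs : IsSingularPolygon q
  · rw [if_pos hs]
    obtain ⟨d, hd⟩ := hs
    have hd0 : d ≠ 0 := by
      obtain ⟨c, hc⟩ := hd ⟨0, by omega⟩
      rintro rfl
      rw [smul_zero] at hc
      exact hq _ hc
    have heq : ∀ j, (ℝ ∙ q j)ᗮ = (ℝ ∙ d)ᗮ := by
      intro j
      obtain ⟨c, hc⟩ := hd j
      have hc0 : c ≠ 0 := by rintro rfl; exact hq j (by simp [hc])
      rw [hc, Submodule.span_singleton_smul_eq (IsUnit.mk0 c hc0) d]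
    have hsup : (⨆ j, (ℝ ∙ q j)ᗮ) = (ℝ ∙ d)ᗮ := by
      have : Nonempty (Fin m) := ⟨⟨0, by omega⟩⟩
      rw [iSup_congr heq, iSup_const]
    rw [hsup] at hker
    have h1 := Submodule.finrank_add_finrank_orthogonal (K := (ℝ ∙ d))
    rw [finrank_span_singleton hd0, finrank_euclideanSpace_fin] at h1
    omega
  · rw [if_neg hs]
    simp only [IsSingularPolygon, not_exists, not_forall] at hs
    obtain ⟨j1, hj1⟩ := hs (q ⟨0, by omega⟩)
    set j0 : Fin m := ⟨0, by omega⟩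
    have hdisj : (ℝ ∙ q j0) ⊓ (ℝ ∙ q j1) = ⊥ := by
      rw [Submodule.eq_bot_iff]
      intro v hv
      obtain ⟨hv0, hv1⟩ := Submodule.mem_inf.mp hv
      rw [Submodule.mem_span_singleton] at hv0 hv1
      obtain ⟨a, rfl⟩ := hv0
      obtain ⟨b, hb⟩ := hv1
      rcases eq_or_ne b 0 with rfl | hb0
      · simpa using hb.symm
      · exact absurd (by rw [mul_smul, ← hb, inv_smul_smul₀ hb0]) (hj1 (b⁻¹ * a))
    have key : (ℝ ∙ q j0)ᗮ ⊔ (ℝ ∙ q j1)ᗮ = ((ℝ ∙ q j0) ⊓ (ℝ ∙ q j1))ᗮ := by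
      have h := Submodule.inf_orthogonal ((ℝ ∙ q j0)ᗮ) ((ℝ ∙ q j1)ᗮ)
      rw [Submodule.orthogonal_orthogonal, Submodule.orthogonal_orthogonal] at h
      rw [h, Submodule.orthogonal_orthogonal]
    rw [hdisj] at key
    have hsup : (⨆ j, (ℝ ∙ q j)ᗮ) = ⊤ := by
      rw [eq_top_iff, ← Submodule.bot_orthogonal_eq_top, ← key]
      exact sup_le (le_iSup (fun j => (ℝ ∙ q j)ᗮ) j0) (le_iSup (fun j => (ℝ ∙ q j)ᗮ) j1)
    rw [hsup, finrank_top, finrank_euclideanSpace_fin] at hker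
    omega


def tangentEquiv (n : ℕ) (k : Fin n → ℕ) (p : (i : Fin n) → Fin (k i) → E3) :
    ↥(polygonTangentSpace n k p) ≃ₗ[ℝ] ((i : Fin n) → ↥(sT (p i))) where
  toFun t := fun i => ⟨t.1 i, fun j => t.2.1 i j, t.2.2 i⟩
  invFun t := ⟨fun i => (t i : Fin (k i) → E3), fun i j => (t i).2.1 j, fun i => (t i).2.2⟩
  left_inv _ := rfl
  right_inv _ := rfl
  map_add' _ _ := rfl
  map_smul' _ _ := rfl

open scoped Classical in
/-- The dimension of the tangent space to the scheme of
polygons at `p` is `m + ∑ i (2 kᵢ − 3)`, where `m` is the number of singular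
components: each nonsingular component contributes `2 kᵢ − 3` and each
singular one `2 kᵢ − 2`. -/
theorem polygonTangentSpace_finrank (n : ℕ) (k : Fin n → ℕ) (hk : ∀ i, 3 ≤ k i)
    (ℓ : (i : Fin n) → Fin (k i) → ℝ) (hℓ : ∀ i j, 0 < ℓ i j)
    (hnd : ∀ i j, 2 * ℓ i j < ∑ j', ℓ i j')
    (p : (i : Fin n) → Fin (k i) → E3)
    (hlen : ∀ i j, ‖p i j‖ = ℓ i j) (hclosed : ∀ i, ∑ j, p i j = 0) :
    Module.finrank ℝ (polygonTangentSpace n k p) =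
      Nat.card {i : Fin n | IsSingularPolygon (p i)} + ∑ i, (2 * k i - 3) := by
  have hq : ∀ i j, p i j ≠ 0 := fun i j => by
    intro h
    have := hlen i j
    rw [h, norm_zero] at this
    exact absurd this.symm (ne_of_gt (hℓ i j))
  rw [(tangentEquiv n k p).finrank_eq, Module.finrank_pi_fintype]
  have hterm : ∀ i, Module.finrank ℝ ↥(sT (p i)) =
      (if IsSingularPolygon (p i) then 1 else 0) + (2 * k i - 3) := by
    intro i
    rw [singleTangent_finrank (hk i) (p i) (hq i)]
    have := hk i
    split <;> omega
  simp only [hterm]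
  rw [Finset.sum_add_distrib]
  congr 1
  rw [Nat.card_eq_fintype_card, Fintype.card_subtype, Finset.card_filter]
  apply Finset.sum_congr rfl
  intro i _
  simp [Set.mem_setOf_eq]
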